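/- If 0 < x < min(y, 1−y) with y in (0,1), then Φ̄^{−1}(x) − Φ̄^{−1}(y) ≤ (y − x)/(x·Φ̄^{−1}(x)). -/

import Mathlib

open Real

/-- Standard normal density. -/
noncomputable def gphi (t : ℝ) : ℝ := (Real.sqrt (2 * Real.pi))⁻¹ * Real.exp (-(t ^ 2) / 2)

/-- Standard normal upper-tail (survival) function. -/
noncomputable def Phibar (t : ℝ) : ℝ := ∫ s in Set.Ioi t, gphi s

/-- Inverse of the standard normal upper-tail function. -/
noncomputable def PhibarInv (x : ℝ) : ℝ := Function.invFun Phibar x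

/-!
Put `a = Φ̄⁻¹(x)` and `b = Φ̄⁻¹(y)`. As `Φ̄` is strictly decreasing with `Φ̄(0) = 1/2` and
`Φ̄(-a) = 1 - x > y > x`, we get `0 < a` and `-a < b < a`. So `|t| ≤ a` on `[b, a]`, whence
`y - x = ∫_b^a φ ≥ (a - b) φ(a)`, and Mills' inequality `a Φ̄(a) ≤ φ(a)` turns this into
`(a - b) · a x ≤ y - x`.
-/

open MeasureTheory Filter Set Topology

lemma gphi_eq_gaussianPDFReal : gphi = ProbabilityTheory.gaussianPDFReal 0 1 := by
  funext t
  simp [gphi, ProbabilityTheory.gaussianPDFReal]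

lemma gphi_pos (t : ℝ) : 0 < gphi t := by
  unfold gphi
  positivity

lemma continuous_gphi : Continuous gphi := by
  unfold gphi
  fun_prop

lemma integrable_gphi : Integrable gphi :=
  gphi_eq_gaussianPDFReal ▸ ProbabilityTheory.integrable_gaussianPDFReal 0 1

lemma integral_gphi : ∫ t, gphi t = 1 :=
  gphi_eq_gaussianPDFReal ▸ ProbabilityTheory.integral_gaussianPDFReal_eq_one 0 one_ne_zero

lemma gphi_neg (t : ℝ) : gphi (-t) = gphi t := by
  simp [gphi]

lemma gphi_le_gphi_of_abs_le {s t : ℝ} (h : |s| ≤ |t|) : gphi t ≤ gphi s := by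
  have : s ^ 2 ≤ t ^ 2 := sq_le_sq.mpr h
  unfold gphi
  gcongr

lemma hasDerivAt_gphi (t : ℝ) : HasDerivAt gphi (-t * gphi t) t := by
  have h : HasDerivAt (fun s : ℝ => -(s ^ 2) / 2) (-t) t :=
    ((hasDerivAt_pow 2 t).neg.div_const 2).congr_deriv (by ring)
  exact (h.exp.const_mul (Real.sqrt (2 * Real.pi))⁻¹).congr_deriv (by simp only [gphi]; ring)

lemma tendsto_gphi_atTop : Tendsto gphi atTop (𝓝 0) := by
  have h : Tendsto (fun t : ℝ => -(t ^ 2) / 2) atTop atBot :=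
    (tendsto_neg_atTop_atBot.comp (tendsto_pow_atTop two_ne_zero)).atBot_div_const two_pos
  have := (Real.tendsto_exp_atBot.comp h).const_mul (Real.sqrt (2 * Real.pi))⁻¹
  rw [mul_zero] at this
  exact this

lemma integrable_mul_gphi : Integrable (fun t => t * gphi t) := by
  refine ((integrable_mul_exp_neg_mul_sq (b := 1 / 2) (by norm_num)).const_mul
    (Real.sqrt (2 * Real.pi))⁻¹).congr (Eventually.of_forall fun t => ?_)
  simp only [gphi]
  ring_nf

lemma integral_Ioi_mul_gphi (a : ℝ) : ∫ t in Ioi a, t * gphi t = gphi a := by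
  have h := integral_Ioi_of_hasDerivAt_of_tendsto (a := a) continuous_gphi.neg.continuousWithinAt
    (fun t _ => by simpa using (hasDerivAt_gphi t).neg) integrable_mul_gphi.integrableOn
    tendsto_gphi_atTop.neg
  simpa using h

lemma Phibar_sub_Phibar_of_le {a b : ℝ} (h : a ≤ b) :
    Phibar a - Phibar b = ∫ t in a..b, gphi t := by
  rw [Phibar, Phibar, ← Ioc_union_Ioi_eq_Ioi h, setIntegral_union (Ioc_disjoint_Ioi le_rfl)
    measurableSet_Ioi integrable_gphi.integrableOn integrable_gphi.integrableOn,
    intervalIntegral.integral_of_le h, add_sub_cancel_right]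

lemma Phibar_sub_Phibar (a b : ℝ) : Phibar a - Phibar b = ∫ t in a..b, gphi t := by
  rcases le_total a b with h | h
  · exact Phibar_sub_Phibar_of_le h
  · rw [intervalIntegral.integral_symm, ← Phibar_sub_Phibar_of_le h, neg_sub]

lemma Phibar_strictAnti : StrictAnti Phibar := fun a b hab => by
  have := intervalIntegral.intervalIntegral_pos_of_pos integrable_gphi.intervalIntegrable
    gphi_pos hab
  linarith [Phibar_sub_Phibar a b]

lemma Phibar_eq_sub_integral (b : ℝ) : Phibar b = Phibar 0 - ∫ t in (0 : ℝ)..b, gphi t := by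
  linarith [Phibar_sub_Phibar 0 b]

lemma continuous_Phibar : Continuous Phibar := by
  rw [funext Phibar_eq_sub_integral]
  exact continuous_const.sub
    (intervalIntegral.continuous_primitive (fun _ _ => integrable_gphi.intervalIntegrable) 0)

lemma tendsto_Phibar_atTop : Tendsto Phibar atTop (𝓝 0) := by
  have h : Tendsto (fun b => ∫ t in (0 : ℝ)..b, gphi t) atTop (𝓝 (Phibar 0)) :=
    intervalIntegral_tendsto_integral_Ioi 0 integrable_gphi.integrableOn tendsto_id
  simpa only [sub_self, ← Phibar_eq_sub_integral] using h.const_sub (Phibar 0)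

lemma Phibar_neg (a : ℝ) : Phibar (-a) = 1 - Phibar a := by
  have hsum : (∫ t in Iic a, gphi t) + Phibar a = 1 := by
    rw [Phibar, intervalIntegral.integral_Iic_add_Ioi integrable_gphi.integrableOn
      integrable_gphi.integrableOn, integral_gphi]
  have hsymm : ∫ t in Iic a, gphi t = Phibar (-a) := by
    simpa only [gphi_neg, Phibar] using integral_comp_neg_Iic a gphi
  linarith

lemma Phibar_zero : Phibar 0 = 1 / 2 := by
  linarith [neg_zero (G := ℝ) ▸ Phibar_neg 0]

lemma tendsto_Phibar_atBot : Tendsto Phibar atBot (𝓝 1) := by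
  have h := (tendsto_Phibar_atTop.comp tendsto_neg_atBot_atTop).const_sub 1
  rw [sub_zero] at h
  refine h.congr fun b => ?_
  simp [Phibar_neg]

lemma Phibar_PhibarInv {x : ℝ} (h0 : 0 < x) (h1 : x < 1) : Phibar (PhibarInv x) = x := by
  have hx : x ∈ range Phibar := mem_range_of_exists_le_of_exists_ge continuous_Phibar
    (tendsto_Phibar_atTop.eventually_le_const h0).exists
    (tendsto_Phibar_atBot.eventually_const_le h1).exists
  exact Function.invFun_eq hx

lemma mul_Phibar_le_gphi (a : ℝ) : a * Phibar a ≤ gphi a := by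
  rw [← integral_Ioi_mul_gphi a, Phibar, ← integral_const_mul]
  refine setIntegral_mono_on (integrable_gphi.integrableOn.const_mul a)
    integrable_mul_gphi.integrableOn measurableSet_Ioi fun t ht => ?_
  exact mul_le_mul_of_nonneg_right (le_of_lt ht) (gphi_pos t).le

lemma sub_mul_gphi_le_integral {a b : ℝ} (hba : b ≤ a) (hab : -a ≤ b) :
    (a - b) * gphi a ≤ ∫ t in b..a, gphi t := by
  rw [← smul_eq_mul, ← intervalIntegral.integral_const]
  refine intervalIntegral.integral_mono_on hba intervalIntegrable_const
    integrable_gphi.intervalIntegrable fun t ht => gphi_le_gphi_of_abs_le ?_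
  rw [abs_of_nonneg (by linarith : 0 ≤ a), abs_le]
  exact ⟨by linarith [ht.1], ht.2⟩

theorem quantile_diff_upper_small_x (x y : ℝ) (hy0 : 0 < y) (hy1 : y < 1)
    (hx0 : 0 < x) (hx : x < min y (1 - y)) :
    PhibarInv x - PhibarInv y ≤ (y - x) / (x * PhibarInv x) := by
  obtain ⟨hxy, hxy'⟩ := lt_min_iff.mp hx
  set a := PhibarInv x
  set b := PhibarInv y
  have ha : Phibar a = x := Phibar_PhibarInv hx0 (by linarith)
  have hb : Phibar b = y := Phibar_PhibarInv hy0 hy1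
  have ha0 : 0 < a := Phibar_strictAnti.lt_iff_gt.mp (by linarith [Phibar_zero])
  have hba : b < a := Phibar_strictAnti.lt_iff_gt.mp (by linarith)
  have hab : -a < b := Phibar_strictAnti.lt_iff_gt.mp (by linarith [Phibar_neg a])
  have key : (a - b) * (x * a) ≤ y - x := calc
    (a - b) * (x * a) = (a - b) * (a * Phibar a) := by rw [ha, mul_comm x]
    _ ≤ (a - b) * gphi a := mul_le_mul_of_nonneg_left (mul_Phibar_le_gphi a) (by linarith)
    _ ≤ ∫ t in b..a, gphi t := sub_mul_gphi_le_integral hba.le hab.le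
    _ = y - x := by rw [← Phibar_sub_Phibar, ha, hb]
  exact (le_div_iff₀ (mul_pos hx0 ha0)).mpr key
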